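/- Consider the random walk on ℤ_2^m (m ≥ 2) generated by the probability distribution assigning probability 1/m to each standard generator. If x ∈ ℤ_2^m has exactly two nonzero coordinates, then the expected hitting time of x from 0 is E_0[τ_x] = (m/(m−1)) · (2^m − 2). -/

import Mathlib

open scoped ENNReal Classical
open Finset

/-- Position of the random walk started at `x` after increments `w 0, w 1, ...`:
`X_0 = x`, `X_{s+1} = w s + X_s`. -/
def walkPos {G : Type*} [AddGroup G] (x : G) (w : ℕ → G) : ℕ → G
  | 0 => x
  | s + 1 => w s + walkPos x w s

/-- Probability that the random walk generated by `p`, started at `x`,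
has not visited `g` at any time `≤ t` (i.e. `P_x(τ_g > t)`). -/
noncomputable def hitSurvival {G : Type*} [AddGroup G] [Fintype G]
    (p : G → ℝ≥0∞) (x g : G) (t : ℕ) : ℝ≥0∞ :=
  ∑ w : Fin t → G,
    if ∀ s ≤ t, walkPos x (fun i => if h : i < t then w ⟨i, h⟩ else 0) s ≠ g
    then ∏ i, p (w i) else 0

/-- Expected hitting time `E_x[τ_g] = ∑_{t ≥ 0} P_x(τ_g > t)`. -/
noncomputable def expHit {G : Type*} [AddGroup G] [Fintype G]
    (p : G → ℝ≥0∞) (x g : G) : ℝ≥0∞ :=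
  ∑' t : ℕ, hitSurvival p x g t

section Walk

variable {G : Type*} [AddGroup G] [Fintype G] (p : G → ℝ≥0∞)

lemma walkPos_shift (x : G) (w : ℕ → G) (s : ℕ) :
    walkPos x w (s + 1) = walkPos (w 0 + x) (fun i => w (i + 1)) s := by
  induction s with
  | zero => rfl
  | succ s ih => show w (s+1) + walkPos x w (s+1) = _; rw [ih]; rfl

lemma hitSurvival_zero (y g : G) :
    hitSurvival p y g 0 = if y = g then 0 else 1 := by
  rw [hitSurvival, Fintype.sum_unique]
  by_cases h : y = g
  · rw [if_neg, if_pos h]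
    intro hall
    exact hall 0 le_rfl h
  · rw [if_pos, if_neg h]
    · simp
    · intro s hs
      interval_cases s
      exact h

lemma hitSurvival_succ (y g : G) (t : ℕ) :
    hitSurvival p y g (t + 1) =
      if y = g then 0 else ∑ a : G, p a * hitSurvival p (a + y) g t := by
  classical
  rw [hitSurvival]
  rw [← (Fin.consEquiv (fun _ : Fin (t+1) => G)).sum_comp]
  simp only [Fin.consEquiv_apply]
  rw [Fintype.sum_prod_type]
  dsimp only
  have key : ∀ (a : G) (v : Fin t → G),
      (∀ s ≤ t + 1,
        walkPos y (fun i => if h : i < t + 1 then Fin.cons (α := fun _ => G) a v ⟨i, h⟩ else 0) s ≠ g)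
      ↔ (y ≠ g ∧ ∀ s ≤ t, walkPos (a + y) (fun i => if h : i < t then v ⟨i, h⟩ else 0) s ≠ g) := by
    intro a v
    set W : ℕ → G := fun i => if h : i < t + 1 then Fin.cons (α := fun _ => G) a v ⟨i, h⟩ else 0 with hW
    have hW0 : W 0 = a := by simp [hW]
    have hshift : (fun i => W (i + 1)) = (fun i => if h : i < t then v ⟨i, h⟩ else 0) := by
      funext i
      by_cases h : i < t
      · simp only [hW, Nat.succ_lt_succ h, dif_pos, h]
        exact Fin.cons_succ (α := fun _ => G) a v ⟨i, h⟩
      · simp [hW, h, fun hh => h (Nat.lt_of_succ_lt_succ hh)]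
    constructor
    · intro H
      refine ⟨H 0 (by omega), fun s hs => ?_⟩
      have := H (s + 1) (by omega)
      rwa [walkPos_shift, hW0, hshift] at this
    · rintro ⟨h0, H⟩ s hs
      cases s with
      | zero => exact h0
      | succ s =>
        rw [walkPos_shift, hW0, hshift]
        exact H s (by omega)
  have hprod : ∀ (a : G) (v : Fin t → G),
      (∏ i, p (Fin.cons (α := fun _ => G) a v i)) = p a * ∏ i, p (v i) := by
    intro a v
    rw [Fin.prod_univ_succ]
    simp
  by_cases hyg : y = g
  · rw [if_pos hyg]
    refine Finset.sum_eq_zero fun a _ => Finset.sum_eq_zero fun v _ => ?_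
    rw [hprod, if_neg]
    rw [key a v]
    tauto
  · rw [if_neg hyg]
    refine Finset.sum_congr rfl fun a _ => ?_
    rw [hitSurvival, Finset.mul_sum]
    refine Finset.sum_congr rfl fun v _ => ?_
    rw [hprod, if_congr (key a v) rfl rfl]
    by_cases hc : ∀ s ≤ t, walkPos (a + y) (fun i => if h : i < t then v ⟨i, h⟩ else 0) s ≠ g
    · rw [if_pos ⟨hyg, hc⟩, if_pos hc]
    · rw [if_neg (by tauto), if_neg hc, mul_zero]

end Walk

section ExpHit

variable {G : Type*} [AddGroup G] [Fintype G] (p : G → ℝ≥0∞)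

lemma hitSurvival_self (g : G) (t : ℕ) : hitSurvival p g g t = 0 := by
  cases t with
  | zero => rw [hitSurvival_zero, if_pos rfl]
  | succ t => rw [hitSurvival_succ, if_pos rfl]

lemma expHit_self (g : G) : expHit p g g = 0 := by
  rw [expHit]
  simp [hitSurvival_self]

lemma expHit_rec {y g : G} (h : y ≠ g) :
    expHit p y g = 1 + ∑ a : G, p a * expHit p (a + y) g := by
  rw [expHit, tsum_eq_zero_add' ENNReal.summable, hitSurvival_zero, if_neg h]
  congr 1
  have : ∀ t : ℕ, hitSurvival p y g (t + 1) = ∑ a : G, p a * hitSurvival p (a + y) g t := by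
    intro t; rw [hitSurvival_succ, if_neg h]
  rw [tsum_congr this, Summable.tsum_finsetSum (fun a _ => ENNReal.summable)]
  refine Finset.sum_congr rfl fun a _ => ?_
  rw [expHit, ENNReal.tsum_mul_left]

/-- Minimality: any nonnegative supersolution dominates the expected hitting time. -/
lemma expHit_le {g : G} (h : G → ℝ≥0∞) (hg : h g = 0)
    (hrec : ∀ y, y ≠ g → 1 + ∑ a : G, p a * h (a + y) ≤ h y) (y : G) :
    expHit p y g ≤ h y := by
  have main : ∀ T y, ∑ t ∈ Finset.range T, hitSurvival p y g t ≤ h y := by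
    intro T
    induction T with
    | zero => simp
    | succ T ih =>
      intro y
      by_cases hy : y = g
      · subst hy
        simp [hitSurvival_self]
      · rw [Finset.sum_range_succ']
        simp only [hitSurvival_succ p y g, if_neg hy, hitSurvival_zero, if_neg hy]
        calc (∑ t ∈ Finset.range T, ∑ a : G, p a * hitSurvival p (a + y) g t) + 1
            = 1 + ∑ a : G, p a * ∑ t ∈ Finset.range T, hitSurvival p (a + y) g t := by
              rw [Finset.sum_comm, add_comm]
              congr 1
              exact Finset.sum_congr rfl fun a _ => (Finset.mul_sum _ _ _).symm
          _ ≤ 1 + ∑ a : G, p a * h (a + y) :=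
              add_le_add_right (Finset.sum_le_sum fun a _ => mul_le_mul_right (ih _) _) 1
          _ ≤ h y := hrec y hy
  rw [expHit, ENNReal.tsum_eq_iSup_sum]
  refine iSup_le fun s => ?_
  obtain ⟨T, hT⟩ := Finset.exists_nat_subset_range s
  exact le_trans (Finset.sum_le_sum_of_subset hT) (main T y)

end ExpHit

section Chi
variable {m : ℕ}

lemma zmod2_cases (a : ZMod 2) : a = 0 ∨ a = 1 := by revert a; decide

lemma val0 : ((0 : ZMod 2)).val = 0 := rfl
lemma val1 : ((1 : ZMod 2)).val = 1 := rfl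
lemma add11 : (1 + 1 : ZMod 2) = 0 := by decide

noncomputable def chi (S : Finset (Fin m)) (z : Fin m → ZMod 2) : ℝ :=
  ∏ i ∈ S, (-1 : ℝ) ^ (z i).val

lemma chi_factor (a b : ZMod 2) :
    (-1 : ℝ) ^ ((a + b).val) = (-1 : ℝ) ^ a.val * (-1 : ℝ) ^ b.val := by
  rcases zmod2_cases a with ha | ha <;> rcases zmod2_cases b with hb | hb <;>
    subst ha <;> subst hb <;> simp [add11, val0, val1]

lemma chi_add (S : Finset (Fin m)) (y z : Fin m → ZMod 2) :
    chi S (y + z) = chi S y * chi S z := by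
  rw [chi, chi, chi, ← Finset.prod_mul_distrib]
  exact Finset.prod_congr rfl fun i _ => chi_factor (y i) (z i)

lemma chi_zero (S : Finset (Fin m)) : chi S 0 = 1 := by
  simp [chi, val0]

lemma chi_cases (S : Finset (Fin m)) (z : Fin m → ZMod 2) : chi S z = 1 ∨ chi S z = -1 := by
  refine Finset.prod_induction _ (fun r => r = 1 ∨ r = -1) ?_ (Or.inl rfl) fun i _ => ?_
  · rintro a b (ha | ha) (hb | hb) <;> subst ha <;> subst hb <;> norm_num
  · rcases zmod2_cases (z i) with h | h <;> rw [h] <;> simp [val0, val1]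

lemma chi_le_one (S : Finset (Fin m)) (z : Fin m → ZMod 2) : chi S z ≤ 1 := by
  rcases chi_cases S z with h | h <;> rw [h] <;> norm_num

lemma neg_one_le_chi (S : Finset (Fin m)) (z : Fin m → ZMod 2) : -1 ≤ chi S z := by
  rcases chi_cases S z with h | h <;> rw [h] <;> norm_num

lemma chi_single (S : Finset (Fin m)) (i : Fin m) :
    chi S (Pi.single i 1) = if i ∈ S then (-1 : ℝ) else 1 := by
  rw [chi, ← Finset.prod_ite_eq' S i (fun _ => (-1 : ℝ))]
  refine Finset.prod_congr rfl fun j _ => ?_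
  rcases eq_or_ne j i with h | h
  · subst h; simp [val1]
  · simp [Pi.single_apply, h, val0]

lemma sum_chi_single (S : Finset (Fin m)) :
    ∑ i : Fin m, chi S (Pi.single i 1) = (m : ℝ) - 2 * S.card := by
  simp only [chi_single]
  rw [Finset.sum_ite, Finset.sum_const, Finset.sum_const]
  have h1 : Finset.filter (fun i => i ∈ S) Finset.univ = S := by
    ext i; simp
  have h2 : (Finset.filter (fun i => ¬ i ∈ S) Finset.univ).card = m - S.card := by
    rw [Finset.filter_not, Finset.card_sdiff_of_subset (by simp [h1])]
    simp [h1]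
  rw [h1, h2]
  have hle : S.card ≤ m := by simpa using Finset.card_le_card (Finset.subset_univ S)
  rw [nsmul_eq_mul, nsmul_eq_mul]
  push_cast [Nat.cast_sub hle]
  ring

lemma sum_chi (z : Fin m → ZMod 2) :
    ∑ S : Finset (Fin m), chi S z = if z = 0 then (2 : ℝ) ^ m else 0 := by
  have key : ∑ S : Finset (Fin m), chi S z = ∏ i : Fin m, ((-1 : ℝ) ^ ((z i).val) + 1) := by
    rw [Fintype.prod_add]
    simp [chi]
  rw [key]
  by_cases hz : z = 0
  · subst hz
    rw [if_pos rfl]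
    norm_num [val0]
  · rw [if_neg hz]
    obtain ⟨i, hi⟩ : ∃ i, z i ≠ 0 := by
      by_contra h; push_neg at h; exact hz (funext fun i => h i)
    refine Finset.prod_eq_zero (Finset.mem_univ i) ?_
    rcases zmod2_cases (z i) with h | h
    · exact absurd h hi
    · rw [h, val1]; norm_num

end Chi

section HH
variable {m : ℕ}

noncomputable def hh (m : ℕ) (x y : Fin m → ZMod 2) : ℝ :=
  ∑ S : Finset (Fin m), ((m : ℝ) / (2 * S.card)) * (1 - chi S (x - y))

lemma hh_nonneg (x y : Fin m → ZMod 2) : 0 ≤ hh m x y := by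
  refine Finset.sum_nonneg fun S _ => mul_nonneg (by positivity) ?_
  linarith [chi_le_one S (x - y)]

lemma hh_self (x : Fin m → ZMod 2) : hh m x x = 0 := by
  unfold hh
  simp [chi_zero]

lemma zmod2_sub_id : ∀ a b c : ZMod 2, a - (c + b) = a - b + c := by decide

lemma hh_rec (hm : 1 ≤ m) (x y : Fin m → ZMod 2) (hxy : y ≠ x) :
    hh m x y = 1 + (m : ℝ)⁻¹ * ∑ i : Fin m, hh m x (Pi.single i 1 + y) := by
  have hm0 : (m : ℝ) ≠ 0 := Nat.cast_ne_zero.mpr (by omega)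
  have harg : ∀ i : Fin m, x - (Pi.single i 1 + y) = (x - y) + Pi.single i 1 := by
    intro i; funext j
    exact zmod2_sub_id (x j) (y j) ((Pi.single i 1 : Fin m → ZMod 2) j)
  have step : ∑ i : Fin m, hh m x (Pi.single i 1 + y)
      = ∑ S : Finset (Fin m),
          ((m : ℝ) / (2 * S.card)) * ((m : ℝ) - chi S (x - y) * ((m : ℝ) - 2 * S.card)) := by
    unfold hh
    rw [Finset.sum_comm]
    refine Finset.sum_congr rfl fun S _ => ?_
    rw [← Finset.mul_sum]
    congr 1
    have h1 : ∀ i : Fin m, (1 : ℝ) - chi S (x - (Pi.single i 1 + y))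
        = 1 - chi S (x - y) * chi S (Pi.single i 1) := by
      intro i; rw [harg i, chi_add]
    rw [Finset.sum_congr rfl fun i _ => h1 i, Finset.sum_sub_distrib, Finset.sum_const,
      ← Finset.mul_sum, sum_chi_single]
    simp [Finset.card_univ]
  rw [step, Finset.mul_sum, hh]
  have per : ∀ S : Finset (Fin m),
      (m : ℝ)⁻¹ * (((m : ℝ) / (2 * S.card)) * ((m : ℝ) - chi S (x - y) * ((m : ℝ) - 2 * S.card)))
        = ((m : ℝ) / (2 * S.card)) * (1 - chi S (x - y))
          + (if S = ∅ then 0 else chi S (x - y)) := by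
    intro S
    rcases eq_or_ne S ∅ with h | h
    · subst h; simp [hm0]
    · rw [if_neg h]
      have hk : (S.card : ℝ) ≠ 0 :=
        Nat.cast_ne_zero.mpr (Finset.card_ne_zero.mpr (Finset.nonempty_iff_ne_empty.mpr h))
      field_simp
      ring
  rw [Finset.sum_congr rfl fun S _ => per S, Finset.sum_add_distrib]
  have hxy0 : x - y ≠ 0 := sub_ne_zero.mpr (Ne.symm hxy)
  have hlast : ∑ S : Finset (Fin m), (if S = ∅ then (0 : ℝ) else chi S (x - y)) = -1 := by
    have e1 : ∑ S : Finset (Fin m), (if S = ∅ then (0 : ℝ) else chi S (x - y))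
        = (if (∅ : Finset (Fin m)) = ∅ then (0 : ℝ) else chi ∅ (x - y))
          + ∑ S ∈ Finset.univ.erase ∅, (if S = ∅ then (0 : ℝ) else chi S (x - y)) :=
      (Finset.add_sum_erase _ _ (Finset.mem_univ _)).symm
    rw [e1, if_pos rfl, zero_add,
      Finset.sum_congr rfl (fun S hS => if_neg (Finset.ne_of_mem_erase hS)),
      Finset.sum_erase_eq_sub (Finset.mem_univ _), sum_chi, if_neg hxy0]
    simp [chi]
  rw [hlast]
  ring

end HH

section HH0
variable {m : ℕ}

lemma binom_sum (n : ℕ) :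
    ∑ j ∈ Finset.range (n + 1), (n.choose j : ℝ) / (j + 1)
      = (2 ^ (n + 1) - 1) / (n + 1) := by
  have hn : ((n : ℝ) + 1) ≠ 0 := by positivity
  rw [eq_div_iff hn, Finset.sum_mul]
  have per : ∀ j ∈ Finset.range (n + 1),
      (n.choose j : ℝ) / (j + 1) * ((n : ℝ) + 1) = ((n + 1).choose (j + 1) : ℝ) := by
    intro j _
    have h := Nat.add_one_mul_choose_eq n j
    have h' : (((n + 1) * n.choose j : ℕ) : ℝ) = (((n + 1).choose (j + 1) * (j + 1) : ℕ) : ℝ) := by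
      exact_mod_cast congrArg (Nat.cast (R := ℝ)) h
    push_cast at h'
    have hj : ((j : ℝ) + 1) ≠ 0 := by positivity
    field_simp
    linear_combination h'
  rw [Finset.sum_congr rfl per]
  have h2 : ∑ j ∈ Finset.range (n + 2), ((n + 1).choose j : ℝ) = 2 ^ (n + 1) := by
    have := Nat.sum_range_choose (n + 1)
    exact_mod_cast congrArg (Nat.cast (R := ℝ)) this
  have h3 := Finset.sum_range_succ' (fun j => ((n + 1).choose j : ℝ)) (n + 1)
  rw [h3] at h2
  simp only [Nat.choose_zero_right, Nat.cast_one] at h2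
  linarith

set_option maxHeartbeats 1000000 in
lemma hh_zero_eq' {m : ℕ} (n : ℕ) (hmdef : m = n + 2) (x : Fin m → ZMod 2)
    (hcard : (Finset.univ.filter fun i => x i ≠ 0).card = 2) :
    hh m x 0 = (m : ℝ) * (2 ^ m - 2) / ((m : ℝ) - 1) := by
  set D : Finset (Fin m) := Finset.univ.filter (fun i => x i ≠ 0) with hD
  have hchi : ∀ S : Finset (Fin m), chi S x = (-1 : ℝ) ^ ((S ∩ D).card) := by
    intro S
    rw [chi]
    have : ∀ i ∈ S, (-1 : ℝ) ^ (x i).val = if i ∈ D then (-1 : ℝ) else 1 := by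
      intro i _
      by_cases h : i ∈ D
      · rw [if_pos h]
        have : x i = 1 := by
          rcases zmod2_cases (x i) with h0 | h1
          · exact absurd h0 (by simpa [hD] using h)
          · exact h1
        rw [this, val1, pow_one]
      · rw [if_neg h]
        have : x i = 0 := by
          by_contra hne
          exact h (by simp [hD, hne])
        rw [this, val0, pow_zero]
    rw [Finset.prod_congr rfl this, Finset.prod_ite_mem S D (fun _ => (-1 : ℝ)),
      Finset.prod_const]
  have step1 : hh m x 0
      = ∑ S : Finset (Fin m), ((m : ℝ) / (2 * S.card)) * (1 - (-1 : ℝ) ^ ((S ∩ D).card)) := by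
    unfold hh
    rw [sub_zero]
    exact Finset.sum_congr rfl fun S _ => by rw [hchi]
  have hsplit : ∑ S : Finset (Fin m), ((m : ℝ) / (2 * S.card)) * (1 - (-1 : ℝ) ^ ((S ∩ D).card))
      = ∑ q ∈ D.powerset ×ˢ (Finset.univ \ D).powerset,
          ((m : ℝ) / (2 * (q.1.card + q.2.card))) * (1 - (-1 : ℝ) ^ (q.1.card)) := by
    refine Finset.sum_nbij' (fun S => (S ∩ D, S \ D)) (fun q => q.1 ∪ q.2)
      ?_ ?_ ?_ ?_ ?_
    · intro S _
      rw [Finset.mem_product, Finset.mem_powerset, Finset.mem_powerset]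
      exact ⟨Finset.inter_subset_right, Finset.sdiff_subset_sdiff (Finset.subset_univ S) le_rfl⟩
    · intro q _; exact Finset.mem_univ _
    · intro S _
      ext i
      simp only [Finset.mem_union, Finset.mem_inter, Finset.mem_sdiff]
      tauto
    · rintro ⟨A, T⟩ hq
      rw [Finset.mem_product, Finset.mem_powerset, Finset.mem_powerset] at hq
      obtain ⟨hA, hT⟩ := hq
      have hTD : ∀ i ∈ T, i ∉ D := fun i hi => (Finset.mem_sdiff.mp (hT hi)).2
      have h1 : (A ∪ T) ∩ D = A := by
        ext i
        simp only [Finset.mem_inter, Finset.mem_union]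
        constructor
        · rintro ⟨hi | hi, hiD⟩
          · exact hi
          · exact absurd hiD (hTD i hi)
        · intro hi; exact ⟨Or.inl hi, hA hi⟩
      have h2 : (A ∪ T) \ D = T := by
        ext i
        simp only [Finset.mem_sdiff, Finset.mem_union]
        constructor
        · rintro ⟨hi | hi, hiD⟩
          · exact absurd (hA hi) hiD
          · exact hi
        · intro hi; exact ⟨Or.inr hi, hTD i hi⟩
      exact Prod.ext h1 h2
    · intro S _
      have hcardS : (S ∩ D).card + (S \ D).card = S.card :=
        Finset.card_inter_add_card_sdiff S D
      dsimp only
      rw [← hcardS]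
      push_cast
      ring
  rw [step1, hsplit, Finset.sum_product]
  set U : Finset (Fin m) := Finset.univ \ D with hU
  have hDcard : D.card = 2 := hcard
  have hUcard : U.card = n := by
    rw [hU, Finset.card_sdiff_of_subset (Finset.subset_univ D), hDcard, Finset.card_univ]
    simp [hmdef]
  set g : ℕ → ℝ := fun k =>
    ∑ T ∈ U.powerset, ((m : ℝ) / (2 * ((k : ℝ) + (T.card : ℝ)))) * (1 - (-1 : ℝ) ^ k) with hg
  have houter : ∑ A ∈ D.powerset, ∑ T ∈ U.powerset,
        ((m : ℝ) / (2 * ((A.card : ℝ) + (T.card : ℝ)))) * (1 - (-1 : ℝ) ^ (A.card))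
      = ∑ k ∈ Finset.range (D.card + 1), (D.card).choose k • g k :=
    Finset.sum_powerset_apply_card g
  rw [houter, hDcard]
  have hg0 : g 0 = 0 := by simp [hg]
  have hg2 : g 2 = 0 := by norm_num [hg]
  have hg1 : g 1 = ∑ T ∈ U.powerset, (m : ℝ) / (1 + (T.card : ℝ)) := by
    rw [hg]
    refine Finset.sum_congr rfl fun T _ => ?_
    have h1 : (1 : ℝ) + (T.card : ℝ) ≠ 0 := by positivity
    push_cast
    field_simp
    ring
  have hinner : ∑ T ∈ U.powerset, (m : ℝ) / (1 + (T.card : ℝ))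
      = (m : ℝ) * ((2 ^ (n + 1) - 1) / ((n : ℝ) + 1)) := by
    have h4 := Finset.sum_powerset_apply_card (fun j => (m : ℝ) / (1 + (j : ℝ))) (x := U)
    rw [h4, hUcard]
    have h5 : ∀ j ∈ Finset.range (n + 1),
        (n.choose j) • ((m : ℝ) / (1 + (j : ℝ))) = (m : ℝ) * ((n.choose j : ℝ) / ((j : ℝ) + 1)) := by
      intro j _
      rw [nsmul_eq_mul]
      ring
    rw [Finset.sum_congr rfl h5, ← Finset.mul_sum, binom_sum n]
  rw [Finset.sum_range_succ, Finset.sum_range_succ, Finset.sum_range_succ, Finset.sum_range_zero,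
    hg0, hg2, hg1, hinner]
  norm_num
  have hn1 : ((n : ℝ) + 1) ≠ 0 := by positivity
  have hm1 : (m : ℝ) - 1 = (n : ℝ) + 1 := by push_cast [hmdef]; ring
  have hm2 : (2 : ℝ) ^ m = 2 ^ (n + 2) := by rw [hmdef]
  rw [hm1, hm2]
  field_simp
  ring

lemma hh_zero_eq {m : ℕ} (hm : 2 ≤ m) (x : Fin m → ZMod 2)
    (hcard : (Finset.univ.filter fun i => x i ≠ 0).card = 2) :
    hh m x 0 = (m : ℝ) * (2 ^ m - 2) / ((m : ℝ) - 1) := by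
  obtain ⟨n, rfl⟩ : ∃ n, m = n + 2 := ⟨m - 2, by omega⟩
  exact hh_zero_eq' n rfl x hcard

end HH0

lemma zmod2_flip : ∀ a b : ZMod 2, a ≠ b → 1 + a = b := by decide

lemma max_principle {m : ℕ} (hm : 1 ≤ m) (x : Fin m → ZMod 2)
    (d : (Fin m → ZMod 2) → ℝ) (hdx : d x = 0)
    (hrec : ∀ y, y ≠ x → d y = (m : ℝ)⁻¹ * ∑ i : Fin m, d (Pi.single i 1 + y)) :
    ∀ y, d y ≤ 0 := by
  obtain ⟨y₀, -, hy₀⟩ := Finset.exists_max_image Finset.univ d ⟨x, Finset.mem_univ x⟩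
  have hmax : ∀ y, d y ≤ d y₀ := fun y => hy₀ y (Finset.mem_univ y)
  have hm0 : (0 : ℝ) < (m : ℝ) := by exact_mod_cast Nat.pos_of_ne_zero (by omega)
  have key : ∀ k (y : Fin m → ZMod 2), d y = d y₀ →
      (Finset.univ.filter fun i => y i ≠ x i).card = k → d x = d y₀ := by
    intro k
    induction k with
    | zero =>
      intro y hy hk
      have : y = x := by
        funext i
        by_contra hne
        have : i ∈ Finset.univ.filter fun i => y i ≠ x i := by simp [hne]
        rw [Finset.card_eq_zero.mp hk] at this
        exact absurd this (Finset.notMem_empty i)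
      rw [← this, hy]
    | succ k ih =>
      intro y hy hk
      have hyx : y ≠ x := by
        intro h
        rw [h] at hk
        simp at hk
      obtain ⟨i, hi⟩ : ∃ i, i ∈ Finset.univ.filter fun j => y j ≠ x j := by
        rcases Finset.card_pos.mp (by omega : 0 < (Finset.univ.filter fun j => y j ≠ x j).card)
          with ⟨i, hi⟩
        exact ⟨i, hi⟩
      have hine : y i ≠ x i := by simpa using hi
      -- all neighbors achieve the max
      have hnb : ∀ j : Fin m, d (Pi.single j 1 + y) = d y₀ := by
        by_contra hcon
        push_neg at hcon
        obtain ⟨j, hj⟩ := hcon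
        have hjlt : d (Pi.single j 1 + y) < d y₀ := lt_of_le_of_ne (hmax _) hj
        have hsum : ∑ i : Fin m, d (Pi.single i 1 + y) < ∑ _i : Fin m, d y₀ :=
          Finset.sum_lt_sum (fun i _ => hmax _) ⟨j, Finset.mem_univ j, hjlt⟩
        rw [Finset.sum_const, Finset.card_univ, Fintype.card_fin, nsmul_eq_mul] at hsum
        have := hrec y hyx
        rw [hy] at this
        have hlt : d y₀ < d y₀ := by
          calc d y₀ = (m : ℝ)⁻¹ * ∑ i : Fin m, d (Pi.single i 1 + y) := this
            _ < (m : ℝ)⁻¹ * ((m : ℝ) * d y₀) := by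
                exact mul_lt_mul_of_pos_left hsum (by positivity)
            _ = d y₀ := by field_simp
        exact absurd hlt (lt_irrefl _)
      -- the flipped point has distance k
      have hfilter : (Finset.univ.filter fun j => (Pi.single i 1 + y : Fin m → ZMod 2) j ≠ x j)
          = (Finset.univ.filter fun j => y j ≠ x j).erase i := by
        ext j
        rcases eq_or_ne j i with h | h
        · subst h
          simp only [Finset.mem_filter, Finset.mem_erase, Finset.mem_univ, true_and]
          have hxx : (Pi.single j 1 + y : Fin m → ZMod 2) j = x j := by
            have h1 : (Pi.single j 1 + y : Fin m → ZMod 2) j = 1 + y j := by simp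
            rw [h1]
            exact zmod2_flip (y j) (x j) hine
          simp [hxx]
        · have hval : (Pi.single i 1 + y : Fin m → ZMod 2) j = y j := by
            simp [Pi.single_apply, h]
          simp [Finset.mem_filter, Finset.mem_erase, h, hval]
      apply ih (Pi.single i 1 + y) (hnb i)
      rw [hfilter, Finset.card_erase_of_mem hi, hk]
      omega
  have hdy₀ : d x = d y₀ := key _ y₀ rfl rfl
  intro y
  calc d y ≤ d y₀ := hmax y
    _ = d x := hdy₀.symm
    _ = 0 := hdx


/-- For the random walk on `ℤ_2^m` (`m ≥ 2`) generated by the uniform distribution on the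
standard generators, if `x` has exactly two nonzero coordinates then
`E_0[τ_x] = (m/(m-1)) (2^m - 2)`. -/
theorem statement9 (m : ℕ) (hm : 2 ≤ m) (x : Fin m → ZMod 2)
    (hcard : (Finset.univ.filter fun i => x i ≠ 0).card = 2) :
    expHit
        (fun y : Fin m → ZMod 2 => if ∃ i, y = Pi.single i 1 then (m : ℝ≥0∞)⁻¹ else 0)
        0 x = (m : ℝ≥0∞) / ((m - 1 : ℕ) : ℝ≥0∞) * ((2 ^ m - 2 : ℕ) : ℝ≥0∞) := by
  classical
  set p : (Fin m → ZMod 2) → ℝ≥0∞ :=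
    fun y => if ∃ i, y = Pi.single i 1 then (m : ℝ≥0∞)⁻¹ else 0 with hp
  have hm1 : 1 ≤ m := by omega
  have hmR : (0 : ℝ) < (m : ℝ) := by exact_mod_cast (by omega : 0 < m)
  have hx0 : (0 : Fin m → ZMod 2) ≠ x := by
    intro h
    rw [← h] at hcard
    simp at hcard
  have hinj : ∀ i j : Fin m, (Pi.single i 1 : Fin m → ZMod 2) = Pi.single j 1 → i = j := by
    intro i j hij
    by_contra hne
    have h := congrFun hij i
    simp [Pi.single_apply, hne] at h
  have psum : ∀ f : (Fin m → ZMod 2) → ℝ≥0∞,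
      ∑ a : Fin m → ZMod 2, p a * f a = ∑ i : Fin m, (m : ℝ≥0∞)⁻¹ * f (Pi.single i 1) := by
    intro f
    have hmem : ∀ a : Fin m → ZMod 2, (∃ i, a = Pi.single i 1) ↔
        a ∈ Finset.univ.image (fun i : Fin m => (Pi.single i 1 : Fin m → ZMod 2)) := by
      intro a; simp [Finset.mem_image, eq_comm]
    have e1 : ∑ a : Fin m → ZMod 2, p a * f a
        = ∑ a : Fin m → ZMod 2,
            (if a ∈ Finset.univ.image (fun i : Fin m => (Pi.single i 1 : Fin m → ZMod 2))
            then (m : ℝ≥0∞)⁻¹ * f a else 0) := by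
      refine Finset.sum_congr rfl fun a _ => ?_
      simp only [hp]
      by_cases h : ∃ i, a = Pi.single i 1
      · rw [if_pos h, if_pos ((hmem a).mp h)]
      · rw [if_neg h, if_neg (fun hc => h ((hmem a).mpr hc)), zero_mul]
    rw [e1, Finset.sum_ite_mem, Finset.univ_inter,
      Finset.sum_image (fun i _ j _ h => hinj i j h)]
  have Erec : ∀ y : Fin m → ZMod 2, y ≠ x → expHit p y x
      = 1 + (m : ℝ≥0∞)⁻¹ * ∑ i : Fin m, expHit p (Pi.single i 1 + y) x := by
    intro y hy
    rw [expHit_rec p hy, psum (fun a => expHit p (a + y) x), ← Finset.mul_sum]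
  have hinv : (m : ℝ≥0∞)⁻¹ = ENNReal.ofReal ((m : ℝ)⁻¹) := by
    rw [ENNReal.ofReal_inv_of_pos hmR, ENNReal.ofReal_natCast]
  have Hhrec : ∀ y : Fin m → ZMod 2, y ≠ x →
      1 + ∑ a : Fin m → ZMod 2, p a * ENNReal.ofReal (hh m x (a + y))
        = ENNReal.ofReal (hh m x y) := by
    intro y hy
    rw [psum (fun a => ENNReal.ofReal (hh m x (a + y)))]
    calc 1 + ∑ i : Fin m, (m : ℝ≥0∞)⁻¹ * ENNReal.ofReal (hh m x (Pi.single i 1 + y))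
        = ENNReal.ofReal (1 + (m : ℝ)⁻¹ * ∑ i : Fin m, hh m x (Pi.single i 1 + y)) := by
          rw [ENNReal.ofReal_add (by norm_num)
            (mul_nonneg (by positivity) (Finset.sum_nonneg fun i _ => hh_nonneg x _)),
            ENNReal.ofReal_one, ENNReal.ofReal_mul (by positivity),
            ENNReal.ofReal_sum_of_nonneg (fun i _ => hh_nonneg x _), ← hinv, Finset.mul_sum]
      _ = ENNReal.ofReal (hh m x y) := by rw [← hh_rec hm1 x y hy]
  have hEleHh : ∀ y : Fin m → ZMod 2, expHit p y x ≤ ENNReal.ofReal (hh m x y) := by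
    intro y
    refine expHit_le p (fun y => ENNReal.ofReal (hh m x y)) ?_ ?_ y
    · simp [hh_self]
    · intro z hz
      exact le_of_eq (Hhrec z hz)
  have hEfin : ∀ y : Fin m → ZMod 2, expHit p y x ≠ ⊤ :=
    fun y => ne_top_of_le_ne_top ENNReal.ofReal_ne_top (hEleHh y)
  have erec : ∀ y : Fin m → ZMod 2, y ≠ x → (expHit p y x).toReal
      = 1 + (m : ℝ)⁻¹ * ∑ i : Fin m, (expHit p (Pi.single i 1 + y) x).toReal := by
    intro y hy
    rw [Erec y hy,
      ENNReal.toReal_add (by norm_num)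
        (ENNReal.mul_ne_top (by simp; omega)
          (ENNReal.sum_lt_top.mpr fun i _ => (hEfin _).lt_top).ne),
      ENNReal.toReal_mul, ENNReal.toReal_inv, ENNReal.toReal_natCast, ENNReal.toReal_one,
      ENNReal.toReal_sum (fun i _ => hEfin _)]
  have hex : (expHit p x x).toReal = 0 := by
    rw [expHit_self]
    rfl
  have hd : ∀ y : Fin m → ZMod 2, hh m x y - (expHit p y x).toReal ≤ 0 := by
    refine max_principle hm1 x (fun y => hh m x y - (expHit p y x).toReal) ?_ ?_
    · rw [hh_self, hex, sub_zero]
    · intro y hy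
      rw [hh_rec hm1 x y hy, erec y hy, Finset.sum_sub_distrib, mul_sub]
      ring
  have heleq : (expHit p 0 x).toReal = hh m x 0 := by
    have h1 : (expHit p 0 x).toReal ≤ hh m x 0 := by
      calc (expHit p 0 x).toReal ≤ (ENNReal.ofReal (hh m x 0)).toReal :=
            ENNReal.toReal_mono ENNReal.ofReal_ne_top (hEleHh 0)
        _ = hh m x 0 := ENNReal.toReal_ofReal (hh_nonneg x 0)
    have h2 := hd 0
    linarith
  have hfinal : expHit p 0 x = ENNReal.ofReal ((m : ℝ) * (2 ^ m - 2) / ((m : ℝ) - 1)) := by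
    calc expHit p 0 x = ENNReal.ofReal ((expHit p 0 x).toReal) :=
          (ENNReal.ofReal_toReal (hEfin 0)).symm
      _ = _ := by rw [heleq, hh_zero_eq hm x hcard]
  rw [hfinal]
  have hb : 0 < m - 1 := by omega
  have hc : 2 ≤ 2 ^ m := by
    calc 2 = 2 ^ 1 := (pow_one 2).symm
    _ ≤ 2 ^ m := Nat.pow_le_pow_right (by norm_num) hm1
  have e3 : (m : ℝ) * ((2 : ℝ) ^ m - 2) = ((m * (2 ^ m - 2) : ℕ) : ℝ) := by
    push_cast [hc]
    ring
  have e4 : (m : ℝ) - 1 = ((m - 1 : ℕ) : ℝ) := by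
    push_cast [hm1]
    ring
  rw [e3, e4, ENNReal.ofReal_div_of_pos (by exact_mod_cast hb), ENNReal.ofReal_natCast,
    ENNReal.ofReal_natCast, Nat.cast_mul, div_eq_mul_inv, div_eq_mul_inv, mul_right_comm]
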